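/- Let λ ∈ ℕ and let f, g : T^d → R be smooth functions. Then | ∫_{T^d} f(x) g(λ x) dx | ≤ √d ‖f‖_{C^1(T^d)} ‖g‖_{L^1(T^d)} λ^{−1} + | ∫_{T^d} f | · | ∫_{T^d} g |. -/

import Mathlib

open MeasureTheory
open scoped BigOperators

noncomputable section

def Box (d : ℕ) : Set (Fin d → ℝ) := Set.univ.pi fun _ => Set.Ico (0:ℝ) 1

def ZPer {d : ℕ} {E : Type*} (f : (Fin d → ℝ) → E) : Prop :=
  ∀ (x : Fin d → ℝ) (k : Fin d → ℤ), f (x + fun i => (k i : ℝ)) = f x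

def C1Norm {d : ℕ} (f : (Fin d → ℝ) → ℝ) : ℝ :=
  (⨆ x : Fin d → ℝ, ‖f x‖) + ⨆ x : Fin d → ℝ, ‖fderiv ℝ f x‖

-- small cube
def Qc (d lam : ℕ) (k : Fin d → ℕ) : Set (Fin d → ℝ) :=
  Set.univ.pi fun i => Set.Ico ((k i : ℝ)/(lam:ℝ)) (((k i : ℝ)+1)/(lam:ℝ))

section Aux
variable {d : ℕ}

lemma intOn {h : (Fin d → ℝ) → ℝ} (hc : Continuous h) {s : Set (Fin d → ℝ)}
    {a b : Fin d → ℝ} (hs : s ⊆ Set.Icc a b) : IntegrableOn h s :=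
  ((hc.continuousOn).integrableOn_compact isCompact_Icc).mono_set hs

lemma norm_le_csupr {E : Type*} [NormedAddCommGroup E] {h : (Fin d → ℝ) → E}
    (hc : Continuous h) (hp : ZPer h) :
    (∀ x, ‖h x‖ ≤ ⨆ x, ‖h x‖) ∧ BddAbove (Set.range fun x => ‖h x‖) := by
  obtain ⟨C, hC⟩ := (isCompact_Icc (a := (0 : Fin d → ℝ)) (b := 1)).exists_bound_of_continuousOn
    hc.continuousOn
  have key : ∀ x, ‖h x‖ ≤ C := by
    intro x
    have h1 : h x = h (fun i => Int.fract (x i)) := by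
      have := hp (fun i => Int.fract (x i)) (fun i => ⌊x i⌋)
      rw [← this]; congr 1; funext i; rw [Pi.add_apply]; exact (Int.fract_add_floor (x i)).symm
    rw [h1]
    apply hC
    constructor
    · intro i; exact Int.fract_nonneg _
    · intro i; exact (Int.fract_lt_one _).le
  have hb : BddAbove (Set.range fun x => ‖h x‖) := ⟨C, by rintro y ⟨x, rfl⟩; exact key x⟩
  exact ⟨fun x => le_ciSup hb x, hb⟩

lemma fderiv_zper {f : (Fin d → ℝ) → ℝ} (hf : Differentiable ℝ f) (hfper : ZPer f) :
    ZPer (fderiv ℝ f) := by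
  intro x k
  have heq : (fun y : Fin d → ℝ => f (y + fun i => (k i : ℝ))) = f := by
    funext y; exact hfper y k
  have h1 : HasFDerivAt (fun y : Fin d → ℝ => f (y + fun i => (k i : ℝ)))
      (fderiv ℝ f (x + fun i => (k i : ℝ))) x := by
    have h2 := (hf (x + fun i => (k i : ℝ))).hasFDerivAt
    have h3 : HasFDerivAt (fun y : Fin d → ℝ => y + fun i => (k i : ℝ))
        (ContinuousLinearMap.id ℝ (Fin d → ℝ)) x := (hasFDerivAt_id x).add_const _
    have h4 := h2.comp x h3
    rw [ContinuousLinearMap.comp_id] at h4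
    exact h4
  rw [heq] at h1
  exact h1.fderiv.symm

end Aux

section Geo
variable {d lam : ℕ} (hlam : 0 < lam)

lemma Qc_subset_Icc (k : Fin d → ℕ) :
    Qc d lam k ⊆ Set.Icc (fun i => (k i : ℝ)/(lam:ℝ)) (fun i => ((k i : ℝ)+1)/(lam:ℝ)) := by
  intro x hx
  constructor
  · intro i; exact (hx i trivial).1
  · intro i; exact (hx i trivial).2.le

lemma box_subset_Icc : Box d ⊆ Set.Icc (0 : Fin d → ℝ) 1 := by
  intro x hx
  constructor
  · intro i; exact (hx i trivial).1
  · intro i; exact (hx i trivial).2.le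

lemma measurableSet_Qc (k : Fin d → ℕ) : MeasurableSet (Qc d lam k) :=
  MeasurableSet.univ_pi fun i => measurableSet_Ico

lemma measurableSet_Box : MeasurableSet (Box d) :=
  MeasurableSet.univ_pi fun i => measurableSet_Ico

include hlam in
lemma image_box (k : Fin d → ℕ) :
    (fun y : Fin d → ℝ => ((lam:ℝ))⁻¹ • (y + fun i => (k i : ℝ))) '' Box d = Qc d lam k := by
  have hl : (0:ℝ) < (lam:ℝ) := by exact_mod_cast hlam
  ext x
  constructor
  · rintro ⟨y, hy, rfl⟩
    intro i _
    have h1 := (hy i trivial).1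
    have h2 := (hy i trivial).2
    simp only [Pi.smul_apply, Pi.add_apply, smul_eq_mul]
    constructor
    · rw [div_le_iff₀ hl, inv_mul_eq_div, div_mul_cancel₀ _ hl.ne']
      linarith
    · rw [lt_div_iff₀ hl, inv_mul_eq_div, div_mul_cancel₀ _ hl.ne']
      linarith
  · intro hx
    refine ⟨(lam:ℝ) • x - fun i => (k i : ℝ), ?_, ?_⟩
    · intro i _
      have h1 := (hx i trivial).1
      have h2 := (hx i trivial).2
      simp only [Pi.sub_apply, Pi.smul_apply, smul_eq_mul]
      rw [div_le_iff₀ hl] at h1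
      rw [lt_div_iff₀ hl] at h2
      constructor <;> [linarith; linarith]
    · show (lam:ℝ)⁻¹ • ((lam:ℝ) • x - (fun i => (k i:ℝ)) + fun i => (k i:ℝ)) = x
      rw [sub_add_cancel, smul_smul, inv_mul_cancel₀ hl.ne', one_smul]

include hlam in
lemma box_eq_union :
    Box d = ⋃ k ∈ (Finset.univ : Finset (Fin d → Fin lam)),
      Qc d lam (fun i => (k i : ℕ)) := by
  have hl : (0:ℝ) < (lam:ℝ) := by exact_mod_cast hlam
  ext x
  simp only [Set.mem_iUnion, Finset.mem_univ, exists_true_left, exists_prop, true_and]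
  constructor
  · intro hx
    have hk : ∀ i, ∃ m : Fin lam, ((m:ℕ):ℝ)/(lam:ℝ) ≤ x i ∧ x i < (((m:ℕ):ℝ)+1)/(lam:ℝ) := by
      intro i
      have h1 := (hx i trivial).1
      have h2 := (hx i trivial).2
      have hf0 : 0 ≤ ⌊(lam:ℝ) * x i⌋ := Int.floor_nonneg.2 (by positivity)
      have hflt : ⌊(lam:ℝ) * x i⌋ < (lam:ℤ) := by
        apply Int.floor_lt.2
        push_cast
        nlinarith
      have hlt : ⌊(lam:ℝ) * x i⌋.toNat < lam := by omega
      have hcast : ((⌊(lam:ℝ) * x i⌋.toNat : ℕ) : ℝ) = ((⌊(lam:ℝ) * x i⌋ : ℤ) : ℝ) := by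
        exact_mod_cast congrArg (fun z : ℤ => (z:ℝ)) (Int.toNat_of_nonneg hf0)
      refine ⟨⟨⌊(lam:ℝ) * x i⌋.toNat, hlt⟩, ?_, ?_⟩
      · show ((⌊(lam:ℝ) * x i⌋.toNat : ℕ) : ℝ)/(lam:ℝ) ≤ x i
        rw [hcast, div_le_iff₀ hl]
        have := Int.floor_le ((lam:ℝ) * x i)
        linarith
      · show x i < (((⌊(lam:ℝ) * x i⌋.toNat : ℕ) : ℝ)+1)/(lam:ℝ)
        rw [hcast, lt_div_iff₀ hl]
        have := Int.lt_floor_add_one ((lam:ℝ) * x i)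
        linarith
    choose m hm using hk
    exact ⟨m, fun i _ => ⟨(hm i).1, (hm i).2⟩⟩
  · rintro ⟨k, hk⟩
    intro i _
    have h1 := (hk i trivial).1
    have h2 := (hk i trivial).2
    have hki : (k i : ℕ) < lam := (k i).isLt
    constructor
    · exact le_trans (by positivity) h1
    · calc x i < (((k i : ℕ) : ℝ)+1)/(lam:ℝ) := h2
        _ ≤ 1 := by
          rw [div_le_one hl]
          have : ((k i : ℕ) : ℝ) + 1 ≤ (lam : ℝ) := by exact_mod_cast hki
          linarith

end Geo

section Geo2
variable {d lam : ℕ} (hlam : 0 < lam)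

include hlam in
lemma Qc_disjoint {k k' : Fin d → ℕ} (hkk : k ≠ k') :
    Disjoint (Qc d lam k) (Qc d lam k') := by
  have hl : (0:ℝ) < (lam:ℝ) := by exact_mod_cast hlam
  rw [Set.disjoint_left]
  intro x hx hx'
  apply hkk
  funext i
  by_contra hne
  rcases lt_or_gt_of_ne hne with h | h
  · have h1 := (hx i trivial).2
    have h2 := (hx' i trivial).1
    rw [lt_div_iff₀ hl] at h1
    rw [div_le_iff₀ hl] at h2
    have hcast : (k i : ℝ) + 1 ≤ (k' i : ℝ) := by exact_mod_cast h
    nlinarith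
  · have h1 := (hx' i trivial).2
    have h2 := (hx i trivial).1
    rw [lt_div_iff₀ hl] at h1
    rw [div_le_iff₀ hl] at h2
    have hcast : (k' i : ℝ) + 1 ≤ (k i : ℝ) := by exact_mod_cast h
    nlinarith

include hlam in
lemma Qc_volume (k : Fin d → ℕ) :
    (volume (Qc d lam k)).toReal = ((lam:ℝ)⁻¹)^d := by
  have hl : (0:ℝ) < (lam:ℝ) := by exact_mod_cast hlam
  have : volume (Qc d lam k) = ∏ i : Fin d, volume (Set.Ico ((k i : ℝ)/(lam:ℝ)) (((k i : ℝ)+1)/(lam:ℝ))) :=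
    volume_pi_pi _
  rw [this]
  have heach : ∀ i : Fin d, volume (Set.Ico ((k i : ℝ)/(lam:ℝ)) (((k i : ℝ)+1)/(lam:ℝ)))
      = ENNReal.ofReal ((lam:ℝ)⁻¹) := by
    intro i
    rw [Real.volume_Ico]
    congr 1
    field_simp
    ring
  simp only [heach, Finset.prod_const, Finset.card_univ, Fintype.card_fin]
  rw [ENNReal.toReal_pow, ENNReal.toReal_ofReal (by positivity)]

end Geo2

section CoV
variable {d lam : ℕ} (hlam : 0 < lam)

include hlam in
lemma cov (k : Fin d → ℕ) {h : (Fin d → ℝ) → ℝ} (hp : ZPer h) :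
    ∫ x in Qc d lam k, h ((lam:ℝ) • x) = ((lam:ℝ)⁻¹)^d * ∫ x in Box d, h x := by
  have hl : (0:ℝ) < (lam:ℝ) := by exact_mod_cast hlam
  set c : Fin d → ℝ := fun i => (k i : ℝ) with hc
  have hT' : ∀ y ∈ Box d, HasFDerivWithinAt (fun y : Fin d → ℝ => ((lam:ℝ))⁻¹ • (y + c))
      ((lam:ℝ)⁻¹ • ContinuousLinearMap.id ℝ (Fin d → ℝ)) (Box d) y := by
    intro y _
    exact (((hasFDerivAt_id y).add_const c).const_smul ((lam:ℝ)⁻¹)).hasFDerivWithinAt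
  have hinj : Set.InjOn (fun y : Fin d → ℝ => ((lam:ℝ))⁻¹ • (y + c)) (Box d) := by
    intro a _ b _ hab
    have h1 : a + c = b + c := by
      have := smul_right_injective (Fin d → ℝ) (inv_ne_zero hl.ne') hab
      exact this
    exact add_right_cancel h1
  have key := integral_image_eq_integral_abs_det_fderiv_smul volume measurableSet_Box hT' hinj
    (fun x => h ((lam:ℝ) • x))
  rw [image_box hlam k] at key
  rw [key]
  have hdet : ((lam:ℝ)⁻¹ • ContinuousLinearMap.id ℝ (Fin d → ℝ)).det = ((lam:ℝ)⁻¹)^d := by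
    rw [ContinuousLinearMap.det]
    rw [ContinuousLinearMap.coe_smul]
    rw [LinearMap.det_smul]
    simp [Module.finrank_fin_fun]
  have hint : ∀ y ∈ Box d, |((lam:ℝ)⁻¹ • ContinuousLinearMap.id ℝ (Fin d → ℝ)).det|
      • h ((lam:ℝ) • ((lam:ℝ))⁻¹ • (y + c)) = ((lam:ℝ)⁻¹)^d * h y := by
    intro y _
    rw [hdet, smul_smul, mul_inv_cancel₀ hl.ne', one_smul]
    have hper : h (y + c) = h y := by
      have := hp y (fun i => (k i : ℤ))
      simpa [hc] using this
    rw [hper, abs_of_nonneg (by positivity), smul_eq_mul]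
  rw [setIntegral_congr_fun measurableSet_Box hint, integral_const_mul]

end CoV

/-- **Decoupling of slow and fast variables in integrals.**
For every `d`, every frequency `λ ≥ 1` and all smooth `f, g : 𝕋^d → ℝ`,
`|∫ f(x) g(λx) dx| ≤ √d ‖f‖_{C¹} ‖g‖_{L¹} λ^{-1} + |∫ f| |∫ g|`. -/
theorem slow_fast_integral (d : ℕ) (lam : ℕ) (hlam : 0 < lam)
    (f g : (Fin d → ℝ) → ℝ) (hf : ContDiff ℝ (⊤ : ℕ∞) f) (hfper : ZPer f)
    (hg : ContDiff ℝ (⊤ : ℕ∞) g) (hgper : ZPer g) :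
    |∫ x in Box d, f x * g ((lam : ℝ) • x)| ≤
      Real.sqrt d * C1Norm f * (∫ x in Box d, |g x|) / (lam : ℝ)
        + |∫ x in Box d, f x| * |∫ x in Box d, g x| := by
  have hl : (0:ℝ) < (lam:ℝ) := by exact_mod_cast hlam
  rcases Nat.eq_zero_or_pos d with hd | hd
  · subst hd
    have hbox : Box 0 = Set.univ := by ext x; simp [Box]
    have huniv : (volume (Set.univ : Set (Fin 0 → ℝ))).toReal = 1 := by
      rw [volume_pi, Measure.pi_univ]
      simp
    have hinteg : ∀ h : (Fin 0 → ℝ) → ℝ, ∫ x in Box 0, h x = h default := by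
      intro h
      rw [hbox, Measure.restrict_univ, integral_unique, measureReal_def, huniv, one_smul]
      exact congrArg h (Subsingleton.elim _ _)

    have hsm : ((lam:ℝ) • (default : Fin 0 → ℝ)) = default := Subsingleton.elim _ _
    rw [hinteg, hinteg, hinteg, hinteg, hsm, abs_mul]
    simp
  -- main case d ≥ 1
  have fc : Continuous f := hf.continuous
  have gc : Continuous g := hg.continuous
  have glc : Continuous (fun x : Fin d → ℝ => g ((lam:ℝ) • x)) :=
    gc.comp (continuous_const_smul _)
  have φc : Continuous (fun x : Fin d → ℝ => f x * g ((lam:ℝ) • x)) := fc.mul glc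
  set M : ℝ := ⨆ x : Fin d → ℝ, ‖fderiv ℝ f x‖ with hMdef
  have hfd : Differentiable ℝ f := hf.differentiable (by simp)
  have hM : ∀ x, ‖fderiv ℝ f x‖ ≤ M :=
    (norm_le_csupr (hf.continuous_fderiv (by simp)) (fderiv_zper hfd hfper)).1
  have hM0 : 0 ≤ M := le_trans (norm_nonneg _) (hM 0)
  have hC1 : M ≤ C1Norm f := by
    have h0 : (0:ℝ) ≤ ⨆ x : Fin d → ℝ, ‖f x‖ :=
      Real.iSup_nonneg fun x => norm_nonneg _
    rw [C1Norm]; linarith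
  have hC1n : 0 ≤ C1Norm f := le_trans hM0 hC1
  have hsqrt : (1:ℝ) ≤ Real.sqrt d := by
    rw [show (1:ℝ) = Real.sqrt 1 by simp]
    exact Real.sqrt_le_sqrt (by exact_mod_cast hd)
  -- notation
  set kk : (Fin d → Fin lam) → (Fin d → ℕ) := fun k i => (k i : ℕ) with hkk
  have kkinj : Function.Injective kk := by
    intro k k' h
    funext i
    exact Fin.ext (congrFun h i)
  -- integrability on cubes
  have hIOn : ∀ (h : (Fin d → ℝ) → ℝ), Continuous h → ∀ k : Fin d → Fin lam,
      IntegrableOn h (Qc d lam (kk k)) := fun h hc k => intOn hc (Qc_subset_Icc _)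
  have hIOnB : ∀ (h : (Fin d → ℝ) → ℝ), Continuous h → IntegrableOn h (Box d) :=
    fun h hc => intOn hc box_subset_Icc
  -- splitting lemma
  have hsplit : ∀ (h : (Fin d → ℝ) → ℝ), Continuous h →
      ∫ x in Box d, h x = ∑ k : Fin d → Fin lam, ∫ x in Qc d lam (kk k), h x := by
    intro h hc
    rw [box_eq_union hlam]
    exact integral_biUnion_finset Finset.univ (fun k _ => measurableSet_Qc _)
      (fun k _ k' _ hne => Qc_disjoint hlam (fun hh => hne (kkinj hh)))
      (fun k _ => hIOn h hc k)
  -- averages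
  set a : (Fin d → Fin lam) → ℝ := fun k => (lam:ℝ)^d * ∫ x in Qc d lam (kk k), f x with ha
  -- pointwise bound
  have hdiam : ∀ (k : Fin d → Fin lam), ∀ x ∈ Qc d lam (kk k), ∀ y ∈ Qc d lam (kk k),
      ‖x - y‖ ≤ 1/(lam:ℝ) := by
    intro k x hx y hy
    apply pi_norm_le_iff_of_nonneg (by positivity) |>.2
    intro i
    have h1 := (hx i trivial); have h2 := (hy i trivial)
    rw [Pi.sub_apply, Real.norm_eq_abs, abs_sub_le_iff]
    have e1 : ((kk k i : ℝ)+1)/(lam:ℝ) = (kk k i : ℝ)/(lam:ℝ) + 1/(lam:ℝ) := by ring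
    constructor <;> [linarith [h1.1, h1.2, h2.1, h2.2, e1 ▸ h1.2, e1 ▸ h2.2]; linarith [e1 ▸ h1.2, e1 ▸ h2.2, h1.1, h2.1]]
  have hlip : ∀ (k : Fin d → Fin lam), ∀ x ∈ Qc d lam (kk k), ∀ y ∈ Qc d lam (kk k),
      ‖f x - f y‖ ≤ M * (1/(lam:ℝ)) := by
    intro k x hx y hy
    have hconv : Convex ℝ (Qc d lam (kk k)) := convex_pi fun i _ => convex_Ico _ _
    have := hconv.norm_image_sub_le_of_norm_fderiv_le (fun z _ => hfd z)
      (fun z _ => hM z) hy hx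
    calc ‖f x - f y‖ ≤ M * ‖x - y‖ := this
      _ ≤ M * (1/(lam:ℝ)) := by
          apply mul_le_mul_of_nonneg_left (hdiam k x hx y hy) hM0
  have hvol : ∀ k : Fin d → Fin lam, volume (Qc d lam (kk k)) < ⊤ := fun k =>
    lt_of_le_of_lt (measure_mono (Qc_subset_Icc _)) (IsCompact.measure_lt_top isCompact_Icc)
  have hpt : ∀ (k : Fin d → Fin lam), ∀ x ∈ Qc d lam (kk k), |f x - a k| ≤ M / (lam:ℝ) := by
    intro k x hx
    have hconst : ∫ _ in Qc d lam (kk k), f x = ((lam:ℝ)⁻¹)^d * f x := by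
      rw [setIntegral_const, measureReal_def, Qc_volume hlam, smul_eq_mul]
    have hsub : f x - a k = (lam:ℝ)^d * ∫ y in Qc d lam (kk k), (f x - f y) := by
      rw [integral_sub (integrableOn_const (C := f x) (hvol k).ne) (hIOn f fc k), hconst, ha]
      have h1 : ((lam:ℝ))^d * ((lam:ℝ)⁻¹)^d = 1 := by
        rw [← mul_pow, mul_inv_cancel₀ hl.ne', one_pow]
      linear_combination (-(f x)) * h1
    rw [hsub, abs_mul, abs_of_nonneg (by positivity : (0:ℝ) ≤ (lam:ℝ)^d)]
    have hb : ‖∫ y in Qc d lam (kk k), (f x - f y)‖ ≤ (M * (1/(lam:ℝ))) * (volume (Qc d lam (kk k))).toReal :=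
      norm_setIntegral_le_of_norm_le_const (hvol k) (fun y hy => hlip k x hx y hy)
    rw [Real.norm_eq_abs] at hb
    rw [Qc_volume hlam] at hb
    calc (lam:ℝ)^d * |∫ y in Qc d lam (kk k), (f x - f y)|
        ≤ (lam:ℝ)^d * ((M * (1/(lam:ℝ))) * ((lam:ℝ)⁻¹)^d) := by
          exact mul_le_mul_of_nonneg_left hb (by positivity)
      _ = M / (lam:ℝ) := by
          field_simp
          rw [mul_right_comm, ← mul_pow, mul_one_div_cancel hl.ne', one_pow, one_mul]
  
  have covg : ∀ k : Fin d → Fin lam, ∫ x in Qc d lam (kk k), g ((lam:ℝ) • x)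
      = ((lam:ℝ)⁻¹)^d * ∫ x in Box d, g x := fun k => cov hlam _ hgper
  have covag : ∀ k : Fin d → Fin lam, ∫ x in Qc d lam (kk k), |g ((lam:ℝ) • x)|
      = ((lam:ℝ)⁻¹)^d * ∫ x in Box d, |g x| := by
    have hgabs : ZPer (fun x : Fin d → ℝ => |g x|) := fun x m => congrArg abs (hgper x m)
    exact fun k => cov hlam (kk k) (h := fun x => |g x|) hgabs
  have hone : ((lam:ℝ))^d * ((lam:ℝ)⁻¹)^d = 1 := by
    rw [← mul_pow, mul_inv_cancel₀ hl.ne', one_pow]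
  have hcube : ∀ k : Fin d → Fin lam,
      ∫ x in Qc d lam (kk k), f x * g ((lam:ℝ) • x)
        = (∫ x in Qc d lam (kk k), (f x - a k) * g ((lam:ℝ) • x))
          + a k * (((lam:ℝ)⁻¹)^d * ∫ x in Box d, g x) := by
    intro k
    have h1 : IntegrableOn (fun x => (f x - a k) * g ((lam:ℝ) • x)) (Qc d lam (kk k)) :=
      hIOn _ ((fc.sub continuous_const).mul glc) k
    have h2 : IntegrableOn (fun x => a k * g ((lam:ℝ) • x)) (Qc d lam (kk k)) :=
      hIOn _ (continuous_const.mul glc) k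
    calc ∫ x in Qc d lam (kk k), f x * g ((lam:ℝ) • x)
        = ∫ x in Qc d lam (kk k), ((f x - a k) * g ((lam:ℝ) • x) + a k * g ((lam:ℝ) • x)) := by
          congr 1; funext x; ring
      _ = (∫ x in Qc d lam (kk k), (f x - a k) * g ((lam:ℝ) • x))
          + ∫ x in Qc d lam (kk k), a k * g ((lam:ℝ) • x) := integral_add h1 h2
      _ = _ := by rw [integral_const_mul, covg k]
  have hsum : ∫ x in Box d, f x * g ((lam:ℝ) • x)
      = (∑ k : Fin d → Fin lam, ∫ x in Qc d lam (kk k), (f x - a k) * g ((lam:ℝ) • x))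
        + (∫ x in Box d, f x) * ∫ x in Box d, g x := by
    rw [hsplit _ φc, Finset.sum_congr rfl (fun k _ => hcube k), Finset.sum_add_distrib]
    congr 1
    rw [hsplit f fc, Finset.sum_mul]
    apply Finset.sum_congr rfl
    intro k _
    simp only [ha]
    linear_combination ((∫ x in Qc d lam (kk k), f x) * (∫ x in Box d, g x)) * hone
  have hEk : ∀ k : Fin d → Fin lam,
      |∫ x in Qc d lam (kk k), (f x - a k) * g ((lam:ℝ) • x)|
        ≤ (M / (lam:ℝ)) * (((lam:ℝ)⁻¹)^d * ∫ x in Box d, |g x|) := by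
    intro k
    calc |∫ x in Qc d lam (kk k), (f x - a k) * g ((lam:ℝ) • x)|
        ≤ ∫ x in Qc d lam (kk k), |f x - a k| * |g ((lam:ℝ) • x)| := by
          simpa [Real.norm_eq_abs] using norm_integral_le_integral_norm
            (μ := volume.restrict (Qc d lam (kk k)))
            (fun x => (f x - a k) * g ((lam:ℝ) • x))
      _ ≤ ∫ x in Qc d lam (kk k), (M/(lam:ℝ)) * |g ((lam:ℝ) • x)| := by
          apply setIntegral_mono_on
            (hIOn _ ((fc.sub continuous_const).abs.mul glc.abs) k)
            (hIOn _ (continuous_const.mul glc.abs) k)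
            (measurableSet_Qc _)
          intro x hx
          exact mul_le_mul_of_nonneg_right (hpt k x hx) (abs_nonneg _)
      _ = (M / (lam:ℝ)) * (((lam:ℝ)⁻¹)^d * ∫ x in Box d, |g x|) := by
          rw [integral_const_mul, covag k]
  have hg0 : 0 ≤ ∫ x in Box d, |g x| :=
    setIntegral_nonneg measurableSet_Box (fun x _ => abs_nonneg _)
  have hsum2 : |∑ k : Fin d → Fin lam, ∫ x in Qc d lam (kk k), (f x - a k) * g ((lam:ℝ) • x)|
      ≤ M * (∫ x in Box d, |g x|) / (lam:ℝ) := by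
    calc |∑ k : Fin d → Fin lam, ∫ x in Qc d lam (kk k), (f x - a k) * g ((lam:ℝ) • x)|
        ≤ ∑ k : Fin d → Fin lam, |∫ x in Qc d lam (kk k), (f x - a k) * g ((lam:ℝ) • x)| :=
          Finset.abs_sum_le_sum_abs _ _
      _ ≤ ∑ _k : Fin d → Fin lam, (M / (lam:ℝ)) * (((lam:ℝ)⁻¹)^d * ∫ x in Box d, |g x|) :=
          Finset.sum_le_sum fun k _ => hEk k
      _ = ((lam:ℝ)^d) * ((M / (lam:ℝ)) * (((lam:ℝ)⁻¹)^d * ∫ x in Box d, |g x|)) := by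
          rw [Finset.sum_const, nsmul_eq_mul]
          congr 1
          simp [Fintype.card_pi]
      _ = M * (∫ x in Box d, |g x|) / (lam:ℝ) := by
          have he : ((lam:ℝ)^d) * ((M / (lam:ℝ)) * (((lam:ℝ)⁻¹)^d * ∫ x in Box d, |g x|))
              = ((lam:ℝ)^d * ((lam:ℝ)⁻¹)^d) * (M * (∫ x in Box d, |g x|) / (lam:ℝ)) := by
            ring
          rw [he, hone, one_mul]
  have hMle : M ≤ Real.sqrt d * C1Norm f := by nlinarith
  calc |∫ x in Box d, f x * g ((lam:ℝ) • x)|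
      ≤ |∑ k : Fin d → Fin lam, ∫ x in Qc d lam (kk k), (f x - a k) * g ((lam:ℝ) • x)|
        + |(∫ x in Box d, f x) * ∫ x in Box d, g x| := by rw [hsum]; exact abs_add_le _ _
    _ ≤ M * (∫ x in Box d, |g x|) / (lam:ℝ) + |∫ x in Box d, f x| * |∫ x in Box d, g x| := by
        rw [abs_mul]; linarith
    _ ≤ Real.sqrt d * C1Norm f * (∫ x in Box d, |g x|) / (lam:ℝ)
        + |∫ x in Box d, f x| * |∫ x in Box d, g x| := by
        gcongr
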